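/- The IL_set-frame with worlds w, x, y, a0, a1, b0, b1 described by: R generated transitively from wRx, xRy, a_iRb_i (i=0,1), xRb_i (i=0,1); S generated from y S_w {a0,a1} and y S_x {b0,b1} by closing under the IL_set-frame conditions (quasi-reflexivity, inclusion wRuRv → uS_w{v}, quasi-transitivity), is a well-defined IL_set-frame, i.e., satisfies all four S-conditions and has R transitive and conversely well-founded. -/
import Mathlib


/-- Modal formulas of interpretability logic: atoms, ⊥, →, □, ▷. -/
inductive Fm : Type
  | atom : ℕ → Fm
  | bot : Fm
  | imp : Fm → Fm → Fm
  | box : Fm → Fm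
  | rhd : Fm → Fm → Fm
deriving DecidableEq

namespace Fm
def neg (A : Fm) : Fm := .imp A .bot
def conj (A B : Fm) : Fm := neg (.imp A (neg B))
def disj (A B : Fm) : Fm := .imp (neg A) B
def dia (A : Fm) : Fm := neg (.box (neg A))
end Fm

/-- `f` is a boolean propositional evaluation (treats □ and ▷ formulas as atoms). -/
def PropEval (f : Fm → Bool) : Prop :=
  f Fm.bot = false ∧ ∀ A B, f (Fm.imp A B) = (!(f A) || f B)

/-- Propositional tautology. -/
def Taut (A : Fm) : Prop := ∀ f, PropEval f → f A = true

/-- Derivability in the interpretability logic IL extended with extra axioms `X`. -/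
inductive Prov (X : Fm → Prop) : Fm → Prop
  | taut {A} : Taut A → Prov X A
  | extra {A} : X A → Prov X A
  | l1 (A B) : Prov X (.imp (.box (.imp A B)) (.imp (.box A) (.box B)))
  | l2 (A) : Prov X (.imp (.box A) (.box (.box A)))
  | l3 (A) : Prov X (.imp (.box (.imp (.box A) A)) (.box A))
  | j1 (A B) : Prov X (.imp (.box (.imp A B)) (.rhd A B))
  | j2 (A B C) : Prov X (.imp (Fm.conj (.rhd A B) (.rhd B C)) (.rhd A C))
  | j3 (A B C) : Prov X (.imp (Fm.conj (.rhd A C) (.rhd B C)) (.rhd (Fm.disj A B) C))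
  | j4 (A B) : Prov X (.imp (.rhd A B) (.imp (Fm.dia A) (Fm.dia B)))
  | j5 (A) : Prov X (.rhd (Fm.dia A) A)
  | mp {A B} : Prov X (.imp A B) → Prov X A → Prov X B
  | nec {A} : Prov X A → Prov X (.box A)

/-- Derivability in plain IL. -/
def ILProv : Fm → Prop := Prov (fun _ => False)

/-- A Veltman frame (IL-frame). -/
structure VFrame where
  W : Type
  ne : Nonempty W
  R : W → W → Prop
  /-- `S x y z` means `y S_x z`. -/
  S : W → W → W → Prop
  R_trans : ∀ {x y z}, R x y → R y z → R x z
  R_cwf : WellFounded (fun x y => R y x)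
  S_R : ∀ {x y z}, S x y z → R x y ∧ R x z
  S_refl : ∀ {x y}, R x y → S x y y
  R_S : ∀ {x y z}, R x y → R y z → S x y z
  S_trans : ∀ {x u v w}, S x u v → S x v w → S x u w

structure VModel extends VFrame where
  val : W → ℕ → Prop

/-- Satisfaction on Veltman models. -/
def VSat (M : VModel) : M.W → Fm → Prop
  | w, .atom n => M.val w n
  | _, .bot => False
  | w, .imp A B => VSat M w A → VSat M w B
  | w, .box A => ∀ v, M.R w v → VSat M v A
  | w, .rhd A B => ∀ u, M.R w u → VSat M u A → ∃ v, M.S w u v ∧ VSat M v B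

/-- Validity on a Veltman frame. -/
def VFrame.Valid (F : VFrame) (A : Fm) : Prop :=
  ∀ val : F.W → ℕ → Prop, ∀ w : F.W, VSat { toVFrame := F, val := val } w A

/-- A generalized Veltman frame (ILset-frame). -/
structure GFrame where
  W : Type
  ne : Nonempty W
  R : W → W → Prop
  /-- `S w x Y` means `x S_w Y`. -/
  S : W → W → Set W → Prop
  R_trans : ∀ {x y z}, R x y → R y z → R x z
  R_cwf : WellFounded (fun x y => R y x)
  S_ne : ∀ {w x Y}, S w x Y → Y.Nonempty
  S_R : ∀ {w x Y}, S w x Y → R w x ∧ ∀ y ∈ Y, R w y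
  S_refl : ∀ {w x}, R w x → S w x {x}
  S_qtrans : ∀ {w x Y}, S w x Y → ∀ y ∈ Y, ∀ Z, y ∉ Z → S w y Z → S w x Z
  R_S : ∀ {w x y}, R w x → R x y → S w x {y}

structure GModel extends GFrame where
  val : W → ℕ → Prop

/-- Satisfaction on generalized Veltman models. -/
def GSat (M : GModel) : M.W → Fm → Prop
  | w, .atom n => M.val w n
  | _, .bot => False
  | w, .imp A B => GSat M w A → GSat M w B
  | w, .box A => ∀ v, M.R w v → GSat M v A
  | w, .rhd A B => ∀ x, M.R w x → GSat M x A →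
      ∃ Y, M.S w x Y ∧ ∀ y ∈ Y, GSat M y B

/-- Validity on a generalized Veltman frame. -/
def GFrame.Valid (F : GFrame) (A : Fm) : Prop :=
  ∀ val : F.W → ℕ → Prop, ∀ w : F.W, GSat { toGFrame := F, val := val } w A

/-- Instances of the principle M0. -/
def m0fm (A B C : Fm) : Fm :=
  .imp (.rhd A B) (.rhd (Fm.conj (Fm.dia A) (.box C)) (Fm.conj B (.box C)))

/-- Instances of the principle P0. -/
def p0fm (A B : Fm) : Fm := .imp (.rhd A (Fm.dia B)) (.box (.rhd A B))

/-- Instances of the principle R. -/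
def rfm (A B C : Fm) : Fm :=
  .imp (.rhd A B) (.rhd (Fm.neg (.rhd A (Fm.neg C))) (Fm.conj B (.box C)))

/-- Instances of the principle W. -/
def wfm (A B : Fm) : Fm :=
  .imp (.rhd A B) (.rhd A (Fm.conj B (.box (Fm.neg A))))

/-- Instances of the principle W*. -/
def wstarfm (A B C : Fm) : Fm :=
  .imp (.rhd A B)
    (.rhd (Fm.conj B (.box C)) (Fm.conj (Fm.conj B (.box C)) (.box (Fm.neg A))))

/-- Instances of the principle R*. -/
def rstarfm (A B C : Fm) : Fm :=
  .imp (.rhd A B)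
    (.rhd (Fm.neg (.rhd A (Fm.neg C))) (Fm.conj (Fm.conj B (.box C)) (.box (Fm.neg A))))

/-- The frame condition for M0 on generalized Veltman frames. -/
def GFrame.M0Cond (F : GFrame) : Prop :=
  ∀ w x y Y, F.R w x → F.R x y → F.S w y Y →
    ∃ Y', Y' ⊆ Y ∧ F.S w x Y' ∧ ∀ y' ∈ Y', ∀ z, F.R y' z → F.R x z

/-- The frame condition for P0 on generalized Veltman frames. -/
def GFrame.P0Cond (F : GFrame) : Prop :=
  ∀ w x y Y Z, F.R w x → F.R x y → F.S w y Y →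
    (∀ y' ∈ Y, ∃ z ∈ Z, F.R y' z) → ∃ Z', Z' ⊆ Z ∧ F.S x y Z'

/-- `Γ` is a choice set for `(w,x)`. -/
def GFrame.ChoiceSet (F : GFrame) (w x : F.W) (Γ : Set F.W) : Prop :=
  ∀ X, F.S w x X → (X ∩ Γ).Nonempty

/-- The frame condition for R on generalized Veltman frames. -/
def GFrame.RCond (F : GFrame) : Prop :=
  ∀ w x y Y, F.R w x → F.R x y → F.S w y Y →
    ∀ Γ, F.ChoiceSet x y Γ →
      ∃ Y', Y' ⊆ Y ∧ F.S w x Y' ∧ ∀ y' ∈ Y', ∀ z, F.R y' z → z ∈ Γ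

/-- The seven worlds of the frame. -/
inductive W7 : Type
  | w | x | y | a0 | a1 | b0 | b1
deriving DecidableEq

/-- The generating edges of the accessibility relation. -/
inductive Rb : W7 → W7 → Prop
  | wx : Rb .w .x
  | xy : Rb .x .y
  | wa0 : Rb .w .a0
  | wa1 : Rb .w .a1
  | a0b0 : Rb .a0 .b0
  | a1b1 : Rb .a1 .b1
  | xb0 : Rb .x .b0
  | xb1 : Rb .x .b1

/-- `R` is the transitive closure of the generating edges. -/
def R7 : W7 → W7 → Prop := Relation.TransGen Rb

/-- `S` is generated from `y S_w {a0,a1}` and `y S_x {b0,b1}` by closing under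
quasi-reflexivity, the inclusion `wRuRv → u S_w {v}`, and quasi-transitivity. -/
inductive S7 : W7 → W7 → Set W7 → Prop
  | gen1 : S7 .w .y {.a0, .a1}
  | gen2 : S7 .x .y {.b0, .b1}
  | refl {w x} : R7 w x → S7 w x {x}
  | incl {w x y} : R7 w x → R7 x y → S7 w x {y}
  | qtrans {w x Y y Z} : S7 w x Y → y ∈ Y → y ∉ Z → S7 w y Z → S7 w x Z


def W7rank : W7 → ℕ
  | .w => 0
  | .x => 1
  | .a0 => 1
  | .a1 => 1
  | .y => 2
  | .b0 => 2
  | .b1 => 2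

lemma Rb_rank {a b : W7} (h : Rb a b) : W7rank a < W7rank b := by
  cases h <;> simp [W7rank]

lemma W7rank_le (a : W7) : W7rank a ≤ 2 := by cases a <;> simp [W7rank]

lemma R7_rank {a b : W7} (h : R7 a b) : W7rank a < W7rank b := by
  induction h with
  | single h => exact Rb_rank h
  | tail _ h ih => exact ih.trans (Rb_rank h)

/-- the structure ⟨W7, R7, S7⟩ is a well-defined generalized
Veltman frame: `R7` is transitive and conversely well-founded and `S7`
satisfies all four `S`-conditions. -/
theorem seven_world_frame_is_gframe :
    (∀ x y z : W7, R7 x y → R7 y z → R7 x z) ∧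
    WellFounded (fun a b : W7 => R7 b a) ∧
    (∀ w x Y, S7 w x Y → Y.Nonempty) ∧
    (∀ w x Y, S7 w x Y → R7 w x ∧ ∀ y ∈ Y, R7 w y) ∧
    (∀ w x : W7, R7 w x → S7 w x {x}) ∧
    (∀ w x Y, S7 w x Y → ∀ y ∈ Y, ∀ Z, y ∉ Z → S7 w y Z → S7 w x Z) ∧
    (∀ w x y : W7, R7 w x → R7 x y → S7 w x {y}) := by
  refine ⟨fun x y z hx hy => hx.trans hy, ?_, ?_, ?_, fun w x h => S7.refl h,
    fun w x Y h y hy Z hn hs => h.qtrans hy hn hs, fun w x y h1 h2 => S7.incl h1 h2⟩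
  · apply Subrelation.wf (r := fun a b => (3 - W7rank a) < (3 - W7rank b))
    · intro a b h
      have := R7_rank h
      have h1 := W7rank_le a
      have h2 := W7rank_le b
      omega
    · exact (measure (fun a => 3 - W7rank a)).wf
  · intro w x Y h
    induction h with
    | gen1 => exact ⟨.a0, by simp⟩
    | gen2 => exact ⟨.b0, by simp⟩
    | refl _ => exact ⟨_, rfl⟩
    | incl _ _ => exact ⟨_, rfl⟩
    | qtrans _ _ _ _ _ ih => exact ih
  · intro w x Y h
    induction h with
    | gen1 =>
      refine ⟨(Relation.TransGen.single Rb.wx).tail Rb.xy, ?_⟩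
      rintro y (rfl | rfl)
      · exact .single .wa0
      · exact .single .wa1
    | gen2 =>
      refine ⟨.single .xy, ?_⟩
      rintro y (rfl | rfl)
      · exact .single .xb0
      · exact .single .xb1
    | refl h => exact ⟨h, by rintro y rfl; exact h⟩
    | incl h1 h2 => exact ⟨h1, by rintro y rfl; exact h1.trans h2⟩
    | qtrans _ hy _ _ ih1 ih2 => exact ⟨ih1.1, ih2.2⟩
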